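/- Let s > 1 and let G ≤ Aut(T) be an s-split, self-similar group acting spherically transitively. Then the abelianisation of the s-th Basilica group satisfies Bas_s(G)^{ab} ≅ G^s (the direct product of s copies of G). -/

import Mathlib

/-!
Groups of automorphisms of the `m`-regular rooted tree, encoded via portraits:
an automorphism is determined by the family of its labels (local actions)
`label : List (Fin m) → Equiv.Perm (Fin m)`.
-/

namespace Basilica

/-- An automorphism of the `m`-regular rooted tree, given by its portrait. -/
structure TreeAut (m : ℕ) where
  label : List (Fin m) → Equiv.Perm (Fin m)

namespace TreeAut

variable {m : ℕ}

lemma ext_label {a b : TreeAut m} (h : ∀ u, a.label u = b.label u) : a = b := by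
  cases a
  cases b
  simp only [mk.injEq]
  exact funext h

/-- The section of an automorphism at a vertex. -/
def sec (a : TreeAut m) (v : List (Fin m)) : TreeAut m := ⟨fun u => a.label (v ++ u)⟩

@[simp] lemma sec_label (a : TreeAut m) (v u : List (Fin m)) :
    (a.sec v).label u = a.label (v ++ u) := rfl

@[simp] lemma sec_nil (a : TreeAut m) : a.sec [] = a := rfl

lemma sec_sec (a : TreeAut m) (v w : List (Fin m)) : (a.sec v).sec w = a.sec (v ++ w) :=
  ext_label fun u => by simp [List.append_assoc]

/-- The action of a tree automorphism on the vertices (finite words). -/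
def apply : TreeAut m → List (Fin m) → List (Fin m)
  | _, [] => []
  | a, x :: u => a.label [] x :: (a.sec [x]).apply u

/-- The inverse action of a tree automorphism on the vertices. -/
def invApply : TreeAut m → List (Fin m) → List (Fin m)
  | _, [] => []
  | a, x :: u => (a.label [])⁻¹ x :: (a.sec [(a.label [])⁻¹ x]).invApply u

instance : One (TreeAut m) := ⟨⟨fun _ => 1⟩⟩
instance : Mul (TreeAut m) := ⟨fun a b => ⟨fun u => a.label (b.apply u) * b.label u⟩⟩
instance : Inv (TreeAut m) := ⟨fun a => ⟨fun u => (a.label (a.invApply u))⁻¹⟩⟩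

@[simp] lemma one_label (u : List (Fin m)) : (1 : TreeAut m).label u = 1 := rfl

@[simp] lemma mul_label (a b : TreeAut m) (u : List (Fin m)) :
    (a * b).label u = a.label (b.apply u) * b.label u := rfl

@[simp] lemma inv_label (a : TreeAut m) (u : List (Fin m)) :
    a⁻¹.label u = (a.label (a.invApply u))⁻¹ := rfl

@[simp] lemma one_sec (v : List (Fin m)) : (1 : TreeAut m).sec v = 1 := rfl

@[simp] lemma apply_nil (a : TreeAut m) : a.apply [] = [] := rfl

lemma apply_cons (a : TreeAut m) (x : Fin m) (u : List (Fin m)) :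
    a.apply (x :: u) = a.label [] x :: (a.sec [x]).apply u := rfl

@[simp] lemma one_apply (u : List (Fin m)) : (1 : TreeAut m).apply u = u := by
  induction u with
  | nil => rfl
  | cons x u ih => simp [apply_cons, ih]

lemma apply_append (a : TreeAut m) (v u : List (Fin m)) :
    a.apply (v ++ u) = a.apply v ++ (a.sec v).apply u := by
  induction v generalizing a with
  | nil => simp
  | cons x v ih =>
      simp only [List.cons_append, apply_cons, ih, sec_sec, List.singleton_append,
        List.nil_append]

lemma mul_sec (a b : TreeAut m) (v : List (Fin m)) :
    (a * b).sec v = a.sec (b.apply v) * b.sec v :=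
  ext_label fun u => by simp [apply_append]

lemma mul_apply (a b : TreeAut m) (u : List (Fin m)) :
    (a * b).apply u = a.apply (b.apply u) := by
  induction u generalizing a b with
  | nil => rfl
  | cons x u ih =>
      rw [apply_cons, mul_sec, ih]
      simp [apply_cons, Equiv.Perm.mul_apply]

lemma invApply_apply (a : TreeAut m) (u : List (Fin m)) : a.invApply (a.apply u) = u := by
  induction u generalizing a with
  | nil => rfl
  | cons x u ih => simp [apply_cons, invApply, ih]

lemma apply_invApply (a : TreeAut m) (u : List (Fin m)) : a.apply (a.invApply u) = u := by
  induction u generalizing a with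
  | nil => rfl
  | cons x u ih => simp [invApply, apply_cons, ih]

instance : Group (TreeAut m) where
  mul_assoc a b c := ext_label fun u => by simp [mul_apply, mul_assoc]
  one_mul a := ext_label fun u => by simp
  mul_one a := ext_label fun u => by simp
  inv_mul_cancel a := ext_label fun u => by simp [invApply_apply]

lemma apply_injective (a : TreeAut m) : Function.Injective a.apply := by
  intro x y h
  have hx := invApply_apply a x
  rw [h, invApply_apply] at hx
  exact hx.symm

@[simp] lemma apply_length (a : TreeAut m) (u : List (Fin m)) :
    (a.apply u).length = u.length := by
  induction u generalizing a with
  | nil => rfl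
  | cons x u ih => simp [apply_cons, ih]

/-- `cons ρ f` is `ρ · ψ₁⁻¹(f 0, …, f (m-1))`: the automorphism with root label `ρ`
and first-layer sections `f x`. -/
def cons (ρ : Equiv.Perm (Fin m)) (f : Fin m → TreeAut m) : TreeAut m :=
  ⟨fun u =>
    match u with
    | [] => ρ
    | x :: v => (f x).label v⟩

end TreeAut

variable {m : ℕ}

/-- The `n`-th layer stabiliser `St_G(n)` of a group `G` of tree automorphisms. -/
def layerStab (G : Subgroup (TreeAut m)) (n : ℕ) : Subgroup (TreeAut m) where
  carrier := {g | g ∈ G ∧ ∀ u : List (Fin m), u.length = n → g.apply u = u}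
  one_mem' := ⟨G.one_mem, fun u _ => TreeAut.one_apply u⟩
  mul_mem' := by
    rintro a b ⟨haG, ha⟩ ⟨hbG, hb⟩
    refine ⟨G.mul_mem haG hbG, fun u hu => ?_⟩
    rw [TreeAut.mul_apply, hb u hu, ha u hu]
  inv_mem' := by
    rintro a ⟨haG, ha⟩
    refine ⟨G.inv_mem haG, fun u hu => ?_⟩
    apply TreeAut.apply_injective a
    rw [← TreeAut.mul_apply, mul_inv_cancel, TreeAut.one_apply, ha u hu]

/-- A group of tree automorphisms acts spherically transitively if it acts
transitively on every layer. -/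
def SphericallyTransitive (G : Subgroup (TreeAut m)) : Prop :=
  ∀ u v : List (Fin m), u.length = v.length → ∃ g ∈ G, g.apply u = v

/-- A group of tree automorphisms is self-similar if it is closed under sections. -/
def SelfSimilar (G : Subgroup (TreeAut m)) : Prop :=
  ∀ g ∈ G, ∀ v : List (Fin m), g.sec v ∈ G

/-- A spherically transitive group is fractal if `st_G(u)|_u = G` for all vertices `u`. -/
def Fractal (G : Subgroup (TreeAut m)) : Prop :=
  SphericallyTransitive G ∧
    ∀ u : List (Fin m),
      {h : TreeAut m | ∃ g ∈ G, g.apply u = u ∧ g.sec u = h} = (G : Set (TreeAut m))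

/-- A spherically transitive group is strongly fractal if `St_G(1)|_x = G` for all `x ∈ X`. -/
def StronglyFractal (G : Subgroup (TreeAut m)) : Prop :=
  SphericallyTransitive G ∧
    ∀ x : Fin m,
      {h : TreeAut m | ∃ g ∈ layerStab G 1, g.sec [x] = h} = (G : Set (TreeAut m))

/-- A spherically transitive group is very strongly fractal if
`St_G(n+1)|_x = St_G(n)` for all `n` and `x ∈ X`. -/
def VeryStronglyFractal (G : Subgroup (TreeAut m)) : Prop :=
  SphericallyTransitive G ∧
    ∀ (n : ℕ) (x : Fin m),
      {h : TreeAut m | ∃ g ∈ layerStab G (n + 1), g.sec [x] = h}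
        = (layerStab G n : Set (TreeAut m))

/-- A group of tree automorphisms is contracting if it has a finite nucleus. -/
def Contracting (G : Subgroup (TreeAut m)) : Prop :=
  ∃ N : Set (TreeAut m), N.Finite ∧ N ⊆ (G : Set (TreeAut m)) ∧
    ∀ g ∈ G, ∃ k : ℕ, ∀ v : List (Fin m), k < v.length → g.sec v ∈ N

/-- A tree automorphism is finite-state if it has finitely many distinct sections. -/
def FiniteState (f : TreeAut m) : Prop :=
  {h : TreeAut m | ∃ u : List (Fin m), f.sec u = h}.Finite

/-- A tree automorphism is bounded if the number of nontrivial sections at the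
`n`-th layer is bounded uniformly in `n`. -/
def BoundedAut (f : TreeAut m) : Prop :=
  ∃ C : ℕ, ∀ n : ℕ, {u : List (Fin m) | u.length = n ∧ f.sec u ≠ 1}.ncard ≤ C

/-- The `n`-th rigid layer stabiliser: the subgroup generated by the rigid vertex
stabilisers of the vertices of the `n`-th layer. -/
def rigidLayerStab (G : Subgroup (TreeAut m)) (n : ℕ) : Subgroup (TreeAut m) :=
  Subgroup.closure {g | g ∈ G ∧ ∃ v : List (Fin m), v.length = n ∧
    ∀ u : List (Fin m), ¬ v <+: u → g.apply u = u}

/-- A weakly branch group: spherically transitive with nontrivial rigid layer stabilisers. -/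
def WeaklyBranch (G : Subgroup (TreeAut m)) : Prop :=
  SphericallyTransitive G ∧ ∀ n : ℕ, rigidLayerStab G n ≠ ⊥

/-- `H` is weakly regular branch over `K ≤ H` if `ψ₁(St_K(1)) ⊇ K × ⋯ × K`. -/
def WeaklyRegularBranchOver (H K : Subgroup (TreeAut m)) : Prop :=
  K ≤ H ∧ ∀ f : Fin m → TreeAut m, (∀ x, f x ∈ K) → TreeAut.cons 1 f ∈ K

/-- The portrait of the `i`-th Basilica monomorphism `β^s_i` applied to `g`,
computed by recursion over vertices. -/
def betaLabel [NeZero m] (s : ℕ) : List (Fin m) → ℕ → TreeAut m → Equiv.Perm (Fin m)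
  | [], i, g => if i = 0 then g.label [] else 1
  | x :: u, i, g =>
      if i = 0 then betaLabel s u (s - 1) (g.sec [x])
      else if x = 0 then betaLabel s u (i - 1) g else 1

/-- The Basilica monomorphism `β^s_i : Aut(T) → Aut(T)`, satisfying
`β_i(g) = ψ₁⁻¹(β_{i-1}(g), 1, …, 1)` for `1 ≤ i ≤ s-1` and
`β_0(g) = g|^ε · ψ₁⁻¹(β_{s-1}(g|_0), …, β_{s-1}(g|_{m-1}))`. -/
def betaAut [NeZero m] (s i : ℕ) (g : TreeAut m) : TreeAut m := ⟨fun u => betaLabel s u i g⟩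

/-- The `s`-th Basilica group of `G`. -/
def basilica [NeZero m] (s : ℕ) (G : Subgroup (TreeAut m)) : Subgroup (TreeAut m) :=
  Subgroup.closure {b | ∃ g ∈ G, ∃ i < s, b = betaAut s i g}

/-- The subgroup `S_i = ⟨β_j(G) : j ≠ i⟩` of the `s`-th Basilica group. -/
def Ssub [NeZero m] (s i : ℕ) (G : Subgroup (TreeAut m)) : Subgroup (TreeAut m) :=
  Subgroup.closure {b | ∃ g ∈ G, ∃ j < s, j ≠ i ∧ b = betaAut s j g}

/-- The normal closure `N_i` of `S_i` in the `s`-th Basilica group of `G`. -/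
def Nsub [NeZero m] (s i : ℕ) (G : Subgroup (TreeAut m)) : Subgroup (TreeAut m) :=
  Subgroup.closure {x | ∃ b ∈ basilica s G, ∃ y ∈ Ssub s i G, x = b * y * b⁻¹}

/-- The `i`-th splitting kernel `K_i = β_i⁻¹(β_i(G) ∩ N_i)` of `G`, as a set. -/
def Kset [NeZero m] (s i : ℕ) (G : Subgroup (TreeAut m)) : Set (TreeAut m) :=
  {g | g ∈ G ∧ betaAut s i g ∈ Nsub s i G}

/-- The portrait of the monomorphism `π_i` (for the `d`-fold diagonal construction). -/
def piLabel (d : ℕ) : List (Fin m) → ℕ → TreeAut m → Equiv.Perm (Fin m)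
  | [], i, g => if i = 0 then g.label [] else 1
  | x :: u, i, g =>
      if i = 0 then piLabel d u (d - 1) (g.sec [x])
      else piLabel d u (i - 1) g

/-- The monomorphism `π_i : Aut(T) → Aut(T)`, satisfying
`π_0(g) = g|^ε · ψ₁⁻¹(π_{d-1}(g|_0), …, π_{d-1}(g|_{m-1}))` and
`π_i(g) = ψ₁⁻¹(π_{i-1}(g), …, π_{i-1}(g))` for `1 ≤ i ≤ d-1`. -/
def piAut (d i : ℕ) (g : TreeAut m) : TreeAut m := ⟨fun u => piLabel d u i g⟩

/-- The generator of the `m`-adic odometer: `a = σ · ψ₁⁻¹(a, 1, …, 1)` with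
`σ = (0 1 … m-1)`. -/
def odometer (m : ℕ) [NeZero m] : TreeAut m :=
  ⟨fun u => if ∀ x ∈ u, x = 0 then finRotate m else 1⟩

/-- The group `O_m^d = D_d(O_m) = ⟨π_i(a) : 0 ≤ i ≤ d-1⟩`. -/
def OdPow (m d : ℕ) [NeZero m] : Subgroup (TreeAut m) :=
  Subgroup.closure {x | ∃ i < d, x = piAut d i (odometer m)}

/-- The group `Γ` of all automorphisms all of whose labels are powers of the
cycle `σ = (0 1 … m-1)`. -/
def Gamma (m : ℕ) : Subgroup (TreeAut m) where
  carrier := {g | ∀ u : List (Fin m), g.label u ∈ Subgroup.zpowers (finRotate m)}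
  one_mem' := by
    intro u
    rw [TreeAut.one_label]
    exact one_mem _
  mul_mem' := by
    intro a b ha hb u
    rw [TreeAut.mul_label]
    exact mul_mem (ha _) (hb _)
  inv_mem' := by
    intro a ha u
    rw [TreeAut.inv_label]
    exact inv_mem (ha _)

/-- The Hausdorff dimension of `G ≤ Γ` relative to `Γ`. -/
noncomputable def hdim (m : ℕ) (G : Subgroup (TreeAut m)) : ℝ :=
  Filter.liminf (fun n : ℕ =>
    Real.logb m ((layerStab G n).relIndex G) /
      Real.logb m ((layerStab (Gamma m) n).relIndex (Gamma m))) Filter.atTop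

/-- The series of obstructions `o_G(n) = m·log_m|L_G(n-1)| - log_m|L_G(n)|` (for `n ≥ 1`),
where `L_G(n) = St_G(n)/St_G(n+1)`. -/
noncomputable def obstruction (m : ℕ) (G : Subgroup (TreeAut m)) (n : ℕ) : ℝ :=
  m * Real.logb m ((layerStab G n).relIndex (layerStab G (n - 1)))
    - Real.logb m ((layerStab G (n + 1)).relIndex (layerStab G n))

/-- The permutation group induced by `G` on the first layer acts regularly on `X`. -/
def RegularRootAction (G : Subgroup (TreeAut m)) : Prop :=
  (∀ x y : Fin m, ∃ g ∈ G, g.label [] x = y) ∧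
    ∀ g ∈ G, ∀ x : Fin m, g.label [] x = x → g.label [] = 1

/-!
Write `B = Bas_s(G)`. Since `B` is generated by the `β_j(G)` and `β_j(G) ≤ N_i` for `j ≠ i`,
the map `G → B/N_i` induced by `β_i` is onto, and it is injective because `K_i = 1`. The
resulting retractions `B → G` assemble to `B → G^s`, sending `β_i(g)` to `g` in the `i`-th
coordinate, which induces `B^{ab} ≅ G^s` as soon as `G` is abelian. And it is: if `k ∈ G`
moves the vertex `0`, then `⁅β₁g, β₁h⁆ = ⁅β₁g, ⁅β₁h, β₀k⁆⁆ ∈ N_1`, so `⁅g, h⁆ ∈ K_1 = 1`.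
-/

end Basilica

section SplitAbelianization

variable {ι A B : Type*} [Group B]

/-- A named lemma rather than an inline lambda, whose type would be the unfolded `Pairwise` and
would then block `simp` and `rw` with `MonoidHom.noncommPiCoprod_mulSingle`. -/
theorem pairwise_commute_of_commMonoid {N : ι → Type*} [∀ i, MulOneClass (N i)] {M : Type*}
    [CommMonoid M] (φ : ∀ i, N i →* M) : Pairwise fun i j => ∀ x y, Commute (φ i x) (φ j y) :=
  fun _ _ _ _ _ => Commute.all _ _

theorem exists_retraction_of_sup_eq_top [Group A] (b : A →* B) (N : Subgroup B) [N.Normal]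
    (hker : ∀ a, b a ∈ N → a = 1) (hsup : b.range ⊔ N = ⊤) :
    ∃ φ : B →* A, φ.comp b = MonoidHom.id A ∧ N ≤ φ.ker := by
  let q := QuotientGroup.mk' N
  have hinj : Function.Injective (q.comp b) :=
    (injective_iff_map_eq_one _).2 fun a ha => hker a ((QuotientGroup.eq_one_iff _).1 ha)
  have hsurj : Function.Surjective (q.comp b) := by
    rintro ⟨x⟩
    have hx : x ∈ ((b.range ⊔ N : Subgroup B) : Set B) := hsup ▸ Subgroup.mem_top x
    obtain ⟨_, ⟨a, rfl⟩, n, hn, rfl⟩ := Subgroup.mul_normal b.range N ▸ hx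
    exact ⟨a, QuotientGroup.eq.2 (by simpa using hn)⟩
  let e := MulEquiv.ofBijective (q.comp b) ⟨hinj, hsurj⟩
  refine ⟨e.symm.toMonoidHom.comp q, MonoidHom.ext fun a => e.symm_apply_apply a, fun n hn => ?_⟩
  simpa [q] using hn

variable [DecidableEq ι]

theorem exists_monoidHom_pi_apply_eq_mulSingle [Group A] (b : ι → A →* B) (N : ι → Subgroup B)
    [∀ i, (N i).Normal] (hker : ∀ i a, b i a ∈ N i → a = 1)
    (hrange : ∀ i j, j ≠ i → (b j).range ≤ N i) (hgen : ⨆ i, (b i).range = ⊤) :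
    ∃ Φ : B →* (ι → A), ∀ i a, Φ (b i a) = Pi.mulSingle i a := by
  have hsup (i : ι) : (b i).range ⊔ N i = ⊤ := top_le_iff.1 <| hgen ▸ iSup_le fun j => by
    rcases eq_or_ne j i with rfl | hji
    · exact le_sup_left
    · exact (hrange i j hji).trans le_sup_right
  choose φ hφb hφN using fun i => exists_retraction_of_sup_eq_top (b i) (N i) (hker i) (hsup i)
  refine ⟨MonoidHom.pi φ, fun i a => funext fun j => ?_⟩
  rcases eq_or_ne j i with rfl | hji
  · simpa using DFunLike.congr_fun (hφb j) a
  · simpa [Pi.mulSingle_eq_of_ne hji] using hφN j (hrange j i hji.symm ⟨a, rfl⟩)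

noncomputable def abelianizationMulEquivPi [Fintype ι] [CommGroup A] (b : ι → A →* B)
    (Φ : B →* (ι → A)) (hΦ : ∀ i a, Φ (b i a) = Pi.mulSingle i a)
    (hgen : ⨆ i, (b i).range = ⊤) :
    Abelianization B ≃* (ι → A) :=
  MonoidHom.toMulEquiv (Abelianization.lift Φ)
    (MonoidHom.noncommPiCoprod (fun i => Abelianization.of.comp (b i))
      (pairwise_commute_of_commMonoid _))
    (Abelianization.hom_ext _ _ <| MonoidHom.ext fun x => by
      refine (iSup_le fun i => ?_ : ⨆ i, (b i).range ≤ MonoidHom.eqLocus _ _)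
        (hgen ▸ Subgroup.mem_top x)
      rintro _ ⟨a, rfl⟩
      change _ = _
      simp [hΦ])
    (MonoidHom.pi_ext fun i a => by simp [hΦ])

end SplitAbelianization

namespace Basilica

variable {m : ℕ}

namespace TreeAut

lemma label_nil_mul (a b : TreeAut m) : (a * b).label [] = a.label [] * b.label [] := rfl

lemma label_nil_inv (a : TreeAut m) : a⁻¹.label [] = (a.label [])⁻¹ := rfl

lemma mul_sec_singleton (a b : TreeAut m) (x : Fin m) :
    (a * b).sec [x] = a.sec [b.label [] x] * b.sec [x] :=
  mul_sec a b [x]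

lemma inv_sec_singleton (a : TreeAut m) (x : Fin m) :
    a⁻¹.sec [x] = (a.sec [(a.label [])⁻¹ x])⁻¹ := by
  have h := mul_sec_singleton a⁻¹ a ((a.label [])⁻¹ x)
  rw [inv_mul_cancel, one_sec, Equiv.Perm.coe_inv, Equiv.apply_symm_apply] at h
  exact eq_inv_of_mul_eq_one_left h.symm

lemma ext_sec_singleton {a b : TreeAut m} (h₀ : a.label [] = b.label [])
    (h₁ : ∀ x : Fin m, a.sec [x] = b.sec [x]) : a = b :=
  ext_label fun
    | [] => h₀
    | x :: v => congrArg (fun t : TreeAut m => t.label v) (h₁ x)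

end TreeAut

section BasilicaMaps

variable [NeZero m] (s : ℕ)

lemma betaAut_label_nil_zero (g : TreeAut m) : (betaAut s 0 g).label [] = g.label [] := rfl

lemma betaAut_label_nil_succ (i : ℕ) (g : TreeAut m) : (betaAut s (i + 1) g).label [] = 1 := rfl

lemma betaAut_zero_sec_singleton (g : TreeAut m) (x : Fin m) :
    (betaAut s 0 g).sec [x] = betaAut s (s - 1) (g.sec [x]) := rfl

lemma betaAut_succ_sec_singleton (i : ℕ) (g : TreeAut m) (x : Fin m) :
    (betaAut s (i + 1) g).sec [x] = if x = 0 then betaAut s i g else 1 := by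
  split_ifs with hx
  · subst hx
    rfl
  · exact TreeAut.ext_label fun u => if_neg hx

lemma betaLabel_mul (u : List (Fin m)) (i : ℕ) (g h : TreeAut m) :
    betaLabel s u i (g * h) =
      betaLabel s ((betaAut s i h).apply u) i g * betaLabel s u i h := by
  induction u generalizing i g h with
  | nil => cases i <;> simp [betaLabel]
  | cons x v ih =>
    cases i with
    | zero =>
      simp only [TreeAut.apply_cons, betaAut_label_nil_zero, betaAut_zero_sec_singleton,
        betaLabel, if_true]
      rw [TreeAut.mul_sec_singleton, ih]
    | succ i =>
      simp only [TreeAut.apply_cons, betaAut_label_nil_succ, betaAut_succ_sec_singleton,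
        betaLabel, Nat.succ_ne_zero, if_false, Nat.add_sub_cancel, Equiv.Perm.one_apply]
      by_cases hx : x = 0
      · subst hx
        simp only [if_true, ih]
      · simp [hx]

def betaHom (i : ℕ) : TreeAut m →* TreeAut m :=
  MonoidHom.mk' (betaAut s i) fun g h => TreeAut.ext_label fun u => betaLabel_mul s u i g h

@[simp] lemma betaHom_apply (i : ℕ) (g : TreeAut m) : betaHom s i g = betaAut s i g := rfl

end BasilicaMaps

section Commutator

open scoped commutatorElement

variable [NeZero m] (s : ℕ)

/-- `⁅β₁t, β₀k⁆` has section `β₀t` at `0` and its only other nontrivial section at `k(0) ≠ 0`,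
where every section of `β₁w` is trivial. -/
lemma betaAut_one_commutator_eq (w t k : TreeAut m) (hk : k.label [] 0 ≠ 0) :
    ⁅betaAut s 1 w, betaAut s 1 t⁆ = ⁅betaAut s 1 w, ⁅betaAut s 1 t, betaAut s 0 k⁆⁆ := by
  have hk' : (k.label []).symm 0 ≠ 0 := fun h => hk ((Equiv.symm_apply_eq _).1 h).symm
  simp only [commutatorElement_def]
  apply TreeAut.ext_sec_singleton
  · simp only [TreeAut.label_nil_mul, TreeAut.label_nil_inv, betaAut_label_nil_succ,
      betaAut_label_nil_zero]
    group
  · intro x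
    simp only [TreeAut.mul_sec_singleton, TreeAut.inv_sec_singleton, TreeAut.label_nil_mul,
      TreeAut.label_nil_inv, betaAut_label_nil_succ, betaAut_label_nil_zero,
      betaAut_succ_sec_singleton, betaAut_zero_sec_singleton, one_mul, mul_one, inv_one,
      Equiv.Perm.one_apply, Equiv.Perm.coe_inv, Equiv.apply_symm_apply,
      mul_inv_cancel]
    by_cases hx : x = 0
    · simp [hx, hk']
    · by_cases hxk : x = k.label [] 0
      · simp [hxk, hk]
      · have hx' : (k.label []).symm x ≠ 0 := fun h => hxk ((Equiv.symm_apply_eq _).1 h)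
        simp [hx, hx']

end Commutator

section Splitting

variable [NeZero m] {s : ℕ} {G : Subgroup (TreeAut m)}

lemma betaAut_mem_basilica {i : ℕ} (hi : i < s) {g : TreeAut m} (hg : g ∈ G) :
    betaAut s i g ∈ basilica s G :=
  Subgroup.subset_closure ⟨g, hg, i, hi, rfl⟩

lemma betaAut_mem_Ssub {i j : ℕ} (hj : j < s) (hji : j ≠ i) {g : TreeAut m} (hg : g ∈ G) :
    betaAut s j g ∈ Ssub s i G :=
  Subgroup.subset_closure ⟨g, hg, j, hj, hji, rfl⟩

lemma Ssub_le_Nsub (i : ℕ) : Ssub s i G ≤ Nsub s i G :=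
  (Subgroup.closure_le _).2 fun y hy =>
    Subgroup.subset_closure ⟨1, one_mem _, y, Subgroup.subset_closure hy, by group⟩

lemma conj_mem_Nsub {i : ℕ} {b x : TreeAut m} (hb : b ∈ basilica s G) (hx : x ∈ Nsub s i G) :
    b * x * b⁻¹ ∈ Nsub s i G := by
  induction hx using Subgroup.closure_induction with
  | mem y hy =>
    obtain ⟨c, hc, z, hz, rfl⟩ := hy
    exact Subgroup.subset_closure ⟨b * c, mul_mem hb hc, z, hz, by group⟩
  | one => simp
  | mul y z _ _ hy hz => simpa [mul_assoc] using mul_mem hy hz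
  | inv y _ hy => simpa [mul_assoc] using inv_mem hy

instance Nsub_subgroupOf_normal (i : ℕ) : ((Nsub s i G).subgroupOf (basilica s G)).Normal :=
  ⟨fun _ hn b => conj_mem_Nsub b.2 hn⟩

open scoped commutatorElement in
lemma betaAut_one_commutator_mem_Nsub (hs : 1 < s) {g h k : TreeAut m} (hg : g ∈ G)
    (hh : h ∈ G) (hkG : k ∈ G) (hk : k.label [] 0 ≠ 0) :
    betaAut s 1 ⁅g, h⁆ ∈ Nsub s 1 G := by
  have hβh : betaAut s 1 h ∈ basilica s G := betaAut_mem_basilica hs hh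
  have hβk : betaAut s 0 k ∈ Ssub s 1 G := betaAut_mem_Ssub (by omega) zero_ne_one hkG
  have hn : ⁅betaAut s 1 h, betaAut s 0 k⁆ ∈ Nsub s 1 G :=
    mul_mem (Subgroup.subset_closure ⟨_, hβh, _, hβk, rfl⟩) (inv_mem (Ssub_le_Nsub 1 hβk))
  rw [← betaHom_apply, map_commutatorElement, betaHom_apply, betaHom_apply,
    betaAut_one_commutator_eq s g h k hk]
  exact mul_mem (conj_mem_Nsub (betaAut_mem_basilica hs hg) hn) (inv_mem hn)

open scoped commutatorElement in
theorem isMulCommutative_of_Kset_one (hm : 2 ≤ m) (hs : 1 < s)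
    (htrans : SphericallyTransitive G) (hK : ∀ g ∈ Kset s 1 G, g = 1) : IsMulCommutative G := by
  obtain ⟨k, hkG, hk⟩ := htrans [0] [⟨1, hm⟩] rfl
  have hk0 : k.label [] 0 ≠ 0 := by
    rw [(List.cons_eq_cons.1 hk).1]
    simp [Fin.ext_iff]
  refine ⟨⟨fun g h => Subtype.ext ?_⟩⟩
  have hgh : ⁅(g : TreeAut m), (h : TreeAut m)⁆ ∈ Kset s 1 G :=
    ⟨(⁅g, h⁆ : G).2, betaAut_one_commutator_mem_Nsub hs g.2 h.2 hkG hk0⟩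
  exact commutatorElement_eq_one_iff_mul_comm.1 (hK _ hgh)

variable (s G)

def basilicaGen (i : Fin s) : G →* basilica s G :=
  ((betaHom s i).comp G.subtype).codRestrict _ fun g => betaAut_mem_basilica i.isLt g.2

lemma iSup_range_basilicaGen : ⨆ i, (basilicaGen s G i).range = ⊤ := by
  have hgen : Subgroup.closure (((↑) : basilica s G → TreeAut m) ⁻¹'
      {b | ∃ g ∈ G, ∃ i < s, b = betaAut s i g}) = ⊤ :=
    Subgroup.closure_closure_coe_preimage
  refine top_le_iff.1 (hgen ▸ (Subgroup.closure_le _).2 ?_)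
  rintro b ⟨g, hg, i, hi, hb⟩
  exact Subgroup.mem_iSup_of_mem (⟨i, hi⟩ : Fin s) ⟨⟨g, hg⟩, Subtype.ext hb.symm⟩

lemma range_basilicaGen_le_Nsub {i j : Fin s} (hji : j ≠ i) :
    (basilicaGen s G j).range ≤ (Nsub s i G).subgroupOf (basilica s G) := by
  rintro _ ⟨g, rfl⟩
  exact Ssub_le_Nsub _ (betaAut_mem_Ssub j.isLt (Fin.val_ne_of_ne hji) g.2)

end Splitting

theorem basilica_abelianization_general {m : ℕ} [NeZero m] (hm : 2 ≤ m)
    (s : ℕ) (hs : 1 < s) (G : Subgroup (TreeAut m))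
    (htrans : SphericallyTransitive G)
    (hsplit : ∀ i < s, ∀ g ∈ Kset s i G, g = 1) :
    Nonempty (Abelianization ↥(basilica s G) ≃* (Fin s → ↥G)) := by
  have := isMulCommutative_of_Kset_one hm hs htrans (hsplit 1 hs)
  obtain ⟨Φ, hΦ⟩ := exists_monoidHom_pi_apply_eq_mulSingle (basilicaGen s G)
    (fun i => (Nsub s i G).subgroupOf (basilica s G))
    (fun i g hg => Subtype.ext (hsplit i i.isLt g ⟨g.2, hg⟩))
    (fun _ _ => range_basilicaGen_le_Nsub s G)
    (iSup_range_basilicaGen s G)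
  open scoped IsMulCommutative in
  exact ⟨abelianizationMulEquivPi (basilicaGen s G) Φ hΦ (iSup_range_basilicaGen s G)⟩

/-- Let `s > 1` and let `G ≤ Aut(T)` be an `s`-split, self-similar
group acting spherically transitively. Then `Bas_s(G)^{ab} ≅ G^s`. -/
theorem basilica_abelianization {m : ℕ} [NeZero m] (hm : 2 ≤ m)
    (s : ℕ) (hs : 1 < s) (G : Subgroup (TreeAut m))
    (hss : SelfSimilar G) (htrans : SphericallyTransitive G)
    (hsplit : ∀ i < s, ∀ g ∈ Kset s i G, g = 1) :
    Nonempty (Abelianization ↥(basilica s G) ≃* (Fin s → ↥G)) :=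
  basilica_abelianization_general hm s hs G htrans hsplit

end Basilica
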